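/- Let 𝔤 be a finite-dimensional real normed vector space carrying a Lie algebra structure, θ : 𝔤 → 𝔤 a Lie algebra automorphism with θ ∘ θ = id, and let H, X ∈ 𝔤 and c ∈ ℝ satisfy θ(H) = -H and [H, X] = c • X. Define X⁻ = X - θ(X) and X⁺ = X + θ(X). Then exp(ad H)(X⁻) = cosh(c) • X⁻ + sinh(c) • X⁺ and exp(-ad H)(X⁻) = cosh(c) • X⁻ - sinh(c) • X⁺, where exp denotes the exponential of a continuous linear endomorphism of 𝔤 (given by the convergent series Σ_{k≥0} A^k/k!). -/

import Mathlib

lemma exp_apply_eigen {L : Type*} [NormedAddCommGroup L] [NormedSpace ℝ L]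
    [CompleteSpace L] (A : L →L[ℝ] L) (v : L) (c : ℝ) (h : A v = c • v) :
    NormedSpace.exp A v = Real.exp c • v := by
  have hpow : ∀ k : ℕ, (A ^ k) v = c ^ k • v := by
    intro k
    induction k with
    | zero => simp
    | succ n ih =>
      rw [pow_succ, pow_succ]
      simp [ContinuousLinearMap.mul_apply, ih, h, smul_smul, mul_comm]
  rw [NormedSpace.exp_eq_tsum (𝕂 := ℝ)]
  have hs : Summable (fun k : ℕ => ((k.factorial : ℝ)⁻¹) • A ^ k) :=
    NormedSpace.expSeries_summable' A
  have := (ContinuousLinearMap.apply ℝ L v).map_tsum hs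
  simp only [ContinuousLinearMap.apply_apply] at this
  rw [this]
  simp only [ContinuousLinearMap.smul_apply, hpow, Real.exp_eq_exp_ℝ, NormedSpace.exp_eq_tsum (𝕂 := ℝ)]
  rw [← Summable.tsum_smul_const]
  · simp [smul_smul]
  · exact (NormedSpace.expSeries_summable' c)

/-- Let `L` be a finite-dimensional real normed vector space carrying a Lie algebra
structure (given by a bilinear bracket which is alternating and satisfies the Leibniz
form of the Jacobi identity), `θ` an involutive automorphism of this Lie algebra,
`θ H = -H` and `⁅H, X⁆ = c • X`.  Then with `X⁻ = X - θ X`, `X⁺ = X + θ X` and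
`ad H = bracket H` (a continuous linear endomorphism), one has
`exp (ad H) X⁻ = cosh c • X⁻ + sinh c • X⁺` and
`exp (-(ad H)) X⁻ = cosh c • X⁻ - sinh c • X⁺`. -/
theorem exp_ad_cosh_sinh {L : Type*} [NormedAddCommGroup L] [NormedSpace ℝ L]
    [FiniteDimensional ℝ L]
    (bracket : L →ₗ[ℝ] L →ₗ[ℝ] L)
    (halt : ∀ x, bracket x x = 0)
    (hjacobi : ∀ x y z, bracket x (bracket y z) =
      bracket (bracket x y) z + bracket y (bracket x z))
    (θ : L ≃ₗ[ℝ] L) (hbr : ∀ x y, θ (bracket x y) = bracket (θ x) (θ y))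
    (hinv : ∀ x, θ (θ x) = x)
    (H X : L) (c : ℝ) (hH : θ H = -H) (hX : bracket H X = c • X) :
    NormedSpace.exp (LinearMap.toContinuousLinearMap (bracket H)) (X - θ X) =
        Real.cosh c • (X - θ X) + Real.sinh c • (X + θ X) ∧
    NormedSpace.exp (-(LinearMap.toContinuousLinearMap (bracket H))) (X - θ X) =
        Real.cosh c • (X - θ X) - Real.sinh c • (X + θ X) := by
  set A := LinearMap.toContinuousLinearMap (bracket H) with hA
  -- ad H (θ X) = -c • θ X
  have hθX : bracket H (θ X) = (-c) • θ X := by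
    have h1 : θ (bracket (θ H) X) = bracket H (θ X) := by
      have := hbr (θ H) X
      rw [this]
      congr 1
      rw [hH, map_neg, hH, neg_neg]
    have h2 : bracket (θ H) X = (-c) • X := by
      rw [hH, map_neg, LinearMap.neg_apply, hX, ← neg_smul]
    rw [← h1, h2, map_smul]
  have hAX : A X = c • X := hX
  have hAθX : A (θ X) = (-c) • θ X := hθX
  have e1 : NormedSpace.exp A X = Real.exp c • X := exp_apply_eigen A X c hAX
  have e2 : NormedSpace.exp A (θ X) = Real.exp (-c) • θ X :=
    exp_apply_eigen A (θ X) (-c) hAθX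
  have hnAX : (-A) X = (-c) • X := by simp [hAX]
  have hnAθX : (-A) (θ X) = c • θ X := by simp [hAθX]
  have e3 : NormedSpace.exp (-A) X = Real.exp (-c) • X := exp_apply_eigen (-A) X (-c) hnAX
  have e4 : NormedSpace.exp (-A) (θ X) = Real.exp c • θ X :=
    exp_apply_eigen (-A) (θ X) c hnAθX
  constructor
  · rw [map_sub, e1, e2, Real.cosh_eq, Real.sinh_eq]
    have h := Real.exp_pos c
    have h' := Real.exp_pos (-c)
    match_scalars <;> ring
  · rw [map_sub, e3, e4, Real.cosh_eq, Real.sinh_eq]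
    match_scalars <;> ring
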